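/- Let L ⊆ A* be an automatic structure for π : A* → G admitting a departure function D. For all p₁, p₂ > 0 there exists N ∈ ℕ such that: for all u₁,u₂,v₁,v₂ ∈ L, if u₁ and v₁ are p₁-meeting-fellow-travellers (they p₁-fellow travel and u₁π = v₁π) and u₂ and v₂ p₂-fellow travel, then the concatenations u₁u₂ and v₁v₂ N-fellow travel; in fact one may take N = max{2p₁, p₁ + D(2p₁), p₂ + D(2p₁)}. -/
import Mathlib


open scoped NNReal

namespace Auto

/-- The generating set `Aπ ∪ (Aπ)⁻¹` of `G` determined by `π : A* → G`. -/
def gens {A G : Type*} [Group G] (π : FreeMonoid A →* G) : Set G :=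
  (Set.range fun a : A => π (FreeMonoid.of a)) ∪
    Set.range fun a : A => (π (FreeMonoid.of a))⁻¹

/-- The word metric `d_A` on `G`: the least `n` such that `g⁻¹h` is a product of `n`
elements of `Aπ ∪ (Aπ)⁻¹`. -/
noncomputable def wdist {A G : Type*} [Group G] (π : FreeMonoid A →* G) (g h : G) : ℕ :=
  sInf {n : ℕ | ∃ l : List G, l.length = n ∧ (∀ x ∈ l, x ∈ gens π) ∧ l.prod = g⁻¹ * h}

/-- Evaluation of a word of `A*` in `G`. -/
def evalW {A G : Type*} [Group G] (π : FreeMonoid A →* G) (w : List A) : G :=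
  π (FreeMonoid.ofList w)

/-- `u` and `v` `p`-fellow travel: `d_A(u^[n]π, v^[n]π) ≤ p` for all `n`. -/
def FellowTravel {A G : Type*} [Group G] (π : FreeMonoid A →* G) (p : ℝ≥0)
    (u v : List A) : Prop :=
  ∀ n : ℕ, (wdist π (evalW π (u.take n)) (evalW π (v.take n)) : ℝ≥0) ≤ p

/-- `u` and `v` are `p`-meeting-fellow-travellers. -/
def MFT {A G : Type*} [Group G] (π : FreeMonoid A →* G) (p : ℝ≥0) (u v : List A) : Prop :=
  FellowTravel π p u v ∧ evalW π u = evalW π v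

/-- A language is regular if it is accepted by a finite-state automaton. -/
def IsRegular {A : Type*} (L : Language A) : Prop :=
  ∃ (σ : Type) (_ : Fintype σ) (M : DFA A σ), M.accepts = L

/-- `L` is an automatic structure for `π`. -/
structure IsAutomaticStructure {A G : Type*} [Group G] (π : FreeMonoid A →* G)
    (L : Language A) : Prop where
  regular : IsRegular L
  onto : ∀ g : G, ∃ w ∈ L, evalW π w = g
  ft : ∃ N : ℕ, ∀ u ∈ L, ∀ v ∈ L,
    wdist π (evalW π u) (evalW π v) ≤ 1 → FellowTravel π N u v

/-- Evaluation of an element of `A ∪ {ε}`. -/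
def evalOpt {A G : Type*} [Group G] (π : FreeMonoid A →* G) : Option A → G
  | none => 1
  | some a => π (FreeMonoid.of a)

/-- `L` is a biautomatic structure for `π`. -/
structure IsBiautomaticStructure {A G : Type*} [Group G] (π : FreeMonoid A →* G)
    (L : Language A) extends IsAutomaticStructure π L : Prop where
  bi : ∃ N : ℕ, ∀ u ∈ L, ∀ v ∈ L, ∀ a : Option A,
    evalW π v = evalOpt π a * evalW π u →
    ∀ n : ℕ, wdist π (evalOpt π a * evalW π (u.take n)) (evalW π (v.take n)) ≤ N

/-- A language is factorial if it is closed under taking factors. -/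
def IsFactorial {A : Type*} (L : Language A) : Prop :=
  ∀ u ∈ L, ∀ v : List A, v <:+: u → v ∈ L

/-- `D : ℝ≥0 → ℝ≥0` is a departure function for `(G, L)`. -/
def IsDepartureFunction {A G : Type*} [Group G] (π : FreeMonoid A →* G) (L : Language A)
    (D : ℝ≥0 → ℝ≥0) : Prop :=
  ∀ w ∈ L, ∀ r : ℝ≥0, ∀ s t : ℕ, D r ≤ (t : ℝ≥0) → s + t ≤ w.length →
    r < (wdist π (evalW π (w.take s)) (evalW π (w.take (s + t))) : ℝ≥0)

/-- Every point of `S` is within distance `N` of `T`. -/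
def NbhdIn {A G : Type*} [Group G] (π : FreeMonoid A →* G) (N : ℕ) (S T : Set G) : Prop :=
  ∀ s ∈ S, ∃ t ∈ T, wdist π s t ≤ N

/-- The Hausdorff distance between `S` and `T` is at most `N`. -/
def HausdorffLE {A G : Type*} [Group G] (π : FreeMonoid A →* G) (N : ℕ)
    (S T : Set G) : Prop :=
  NbhdIn π N S T ∧ NbhdIn π N T S

/-- `H` is an `L`-quasiconvex subgroup of `G`. -/
def IsQuasiconvex {A G : Type*} [Group G] (π : FreeMonoid A →* G) (L : Language A)
    (H : Subgroup G) : Prop :=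
  ∃ k : ℕ, ∀ h ∈ H, ∀ h' ∈ H, ∀ w ∈ L, h * evalW π w = h' →
    ∀ n : ℕ, ∃ z ∈ H, wdist π (h * evalW π (w.take n)) z ≤ k

/-- The bounded reduction property for `(φ, L, L')`. -/
def BRP {A B G G' : Type*} [Group G] [Group G'] (π : FreeMonoid A →* G)
    (π' : FreeMonoid B →* G') (φ : G →* G') (L : Language A) (L' : Language B) : Prop :=
  ∃ N : ℕ, ∀ x : G, ∀ α ∈ L, ∀ β ∈ L', evalW π' β = φ (evalW π α) →
    HausdorffLE π' N (Set.range fun n : ℕ => φ (x * evalW π (α.take n)))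
      (Set.range fun n : ℕ => φ x * evalW π' (β.take n))

/-- The synchronous bounded reduction property for `(φ, L, L')`. -/
def SyncBRP {A B G G' : Type*} [Group G] [Group G'] (π : FreeMonoid A →* G)
    (π' : FreeMonoid B →* G') (φ : G →* G') (L : Language A) (L' : Language B) : Prop :=
  ∃ N : ℕ, ∀ x : G, ∀ α ∈ L, ∀ β ∈ L', evalW π' β = φ (evalW π α) →
    ∀ n : ℕ, wdist π' (φ (x * evalW π (α.take n))) (φ x * evalW π' (β.take n)) ≤ N

/-- The fellow traveller bounded reduction property (FT-BRP) for `(φ, L, L')`. -/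
def FTBRP {A B G G' : Type*} [Group G] [Group G'] (π : FreeMonoid A →* G)
    (π' : FreeMonoid B →* G') (φ : G →* G') (L : Language A) (L' : Language B) : Prop :=
  ∀ p : ℝ≥0, ∃ q : ℝ≥0,
    ∀ u₁ ∈ L, ∀ u₂ ∈ L, ∀ u₃ ∈ L, ∀ u₁' ∈ L', ∀ u₂' ∈ L', ∀ u₃' ∈ L',
      evalW π' u₁' = φ (evalW π u₁) → evalW π' u₂' = φ (evalW π u₂) →
        evalW π' u₃' = φ (evalW π u₃) →
          MFT π p (u₁ ++ u₂) u₃ → MFT π' q (u₁' ++ u₂') u₃'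

/-- The natural homomorphism `(A ⊔ B)* → G` agreeing with `π₁` on `A` and `π₂` on `B`. -/
def sumHom {A B G : Type*} [Group G] (π₁ : FreeMonoid A →* G) (π₂ : FreeMonoid B →* G) :
    FreeMonoid (A ⊕ B) →* G :=
  FreeMonoid.lift (Sum.elim (fun a => π₁ (FreeMonoid.of a)) fun b => π₂ (FreeMonoid.of b))

/-- The union `L₁ ∪ L₂` viewed as a language over `A ⊔ B`. -/
def unionLang {A B : Type*} (L₁ : Language A) (L₂ : Language B) : Language (A ⊕ B) :=
  {w : List (A ⊕ B) | (∃ u ∈ L₁, w = u.map Sum.inl) ∨ ∃ v ∈ L₂, w = v.map Sum.inr}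

/-- `L` is an asynchronous automatic structure for `π`. -/
def IsAsyncAutomaticStructure {A G : Type*} [Group G] (π : FreeMonoid A →* G)
    (L : Language A) : Prop :=
  IsRegular L ∧ (∀ g : G, ∃ w ∈ L, evalW π w = g) ∧
    ∃ p : ℕ, ∀ u ∈ L, ∀ v ∈ L, wdist π (evalW π u) (evalW π v) ≤ 1 →
      ∃ φ ψ : ℕ → ℕ, Monotone φ ∧ Monotone ψ ∧
        Function.Surjective φ ∧ Function.Surjective ψ ∧
          ∀ t : ℕ, wdist π (evalW π (u.take (φ t))) (evalW π (v.take (ψ t))) ≤ p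

/-- `L₁` and `L₂` are equivalent automatic structures. -/
def LangEquivalent {A B G : Type*} [Group G] (π₁ : FreeMonoid A →* G)
    (π₂ : FreeMonoid B →* G) (L₁ : Language A) (L₂ : Language B) : Prop :=
  IsAsyncAutomaticStructure (sumHom π₁ π₂) (unionLang L₁ L₂)

/-- `L₁` and `L₂` are synchronously equivalent automatic structures. -/
def LangSyncEquivalent {A B G : Type*} [Group G] (π₁ : FreeMonoid A →* G)
    (π₂ : FreeMonoid B →* G) (L₁ : Language A) (L₂ : Language B) : Prop :=
  IsAutomaticStructure (sumHom π₁ π₂) (unionLang L₁ L₂)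

/-- `L` has the Hausdorff closeness property. -/
def HausClose {A G : Type*} [Group G] (π : FreeMonoid A →* G) (L : Language A) : Prop :=
  ∃ N : ℕ, ∀ u ∈ L, ∀ v ∈ L, wdist π (evalW π u) (evalW π v) ≤ 1 →
    HausdorffLE π N (Set.range fun n : ℕ => evalW π (u.take n))
      (Set.range fun n : ℕ => evalW π (v.take n))

/-- The padded alphabet `C = (A×B) ∪ (A×{$}) ∪ ({$}×B)` of convolution. -/
abbrev ConvAlphabet (A B : Type*) := (A × B) ⊕ (A ⊕ B)

/-- The convolution `u ⋄ v` of two words. -/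
def conv {A B : Type*} : List A → List B → List (ConvAlphabet A B)
  | [], [] => []
  | [], b :: v => Sum.inr (Sum.inr b) :: conv [] v
  | a :: u, [] => Sum.inr (Sum.inl a) :: conv u []
  | a :: u, b :: v => Sum.inl (a, b) :: conv u v
  termination_by u v => u.length + v.length

/-- The convolution `L₁ ⋄ L₂` of two languages. -/
def convLang {A B : Type*} (L₁ : Language A) (L₂ : Language B) :
    Language (ConvAlphabet A B) :=
  {w : List (ConvAlphabet A B) | ∃ u ∈ L₁, ∃ v ∈ L₂, w = conv u v}

/-- The natural homomorphism `C* → G × G'` for the convolution alphabet. -/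
def convHom {A B G G' : Type*} [Group G] [Group G'] (π₁ : FreeMonoid A →* G)
    (π₂ : FreeMonoid B →* G') : FreeMonoid (ConvAlphabet A B) →* G × G' :=
  FreeMonoid.lift fun c =>
    match c with
    | Sum.inl (a, b) => (π₁ (FreeMonoid.of a), π₂ (FreeMonoid.of b))
    | Sum.inr (Sum.inl a) => (π₁ (FreeMonoid.of a), 1)
    | Sum.inr (Sum.inr b) => (1, π₂ (FreeMonoid.of b))

/-- A group is automatic if it admits an automatic structure over some finite alphabet. -/
def IsAutomaticGroup (G : Type*) [Group G] : Prop :=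
  ∃ (A : Type) (_ : Fintype A) (π : FreeMonoid A →* G) (L : Language A),
    IsAutomaticStructure π L


section Lemmas
variable {A G : Type*} [Group G] {π : FreeMonoid A →* G}

lemma evalW_append' (x y : List A) : evalW π (x ++ y) = evalW π x * evalW π y := by
  unfold evalW; rw [FreeMonoid.ofList_append, map_mul]

lemma prod_map_eq' (w : List A) :
    (w.map fun a => π (FreeMonoid.of a)).prod = evalW π w := by
  induction w with
  | nil => simp [evalW, FreeMonoid.ofList_nil]
  | cons a w ih =>
      simp only [List.map_cons, List.prod_cons, ih]
      unfold evalW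
      rw [FreeMonoid.ofList_cons, map_mul]

lemma gens_inv' {x : G} (hx : x ∈ gens π) : x⁻¹ ∈ gens π := by
  rcases hx with ⟨a, rfl⟩ | ⟨a, rfl⟩
  · exact Or.inr ⟨a, rfl⟩
  · exact Or.inl ⟨a, by simp⟩

lemma wdist_set_nonempty' (hπ : Function.Surjective π) (g h : G) :
    {n : ℕ | ∃ l : List G, l.length = n ∧ (∀ x ∈ l, x ∈ gens π) ∧ l.prod = g⁻¹ * h}.Nonempty := by
  obtain ⟨m, hm⟩ := hπ (g⁻¹ * h)
  refine ⟨(FreeMonoid.toList m).length, (FreeMonoid.toList m).map (fun a => π (FreeMonoid.of a)),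
    by simp, ?_, ?_⟩
  · intro x hx
    simp only [List.mem_map] at hx
    obtain ⟨a, -, rfl⟩ := hx
    exact Or.inl ⟨a, rfl⟩
  · rw [prod_map_eq']; exact hm

lemma wdist_spec' (hπ : Function.Surjective π) (g h : G) :
    ∃ l : List G, l.length = wdist π g h ∧ (∀ x ∈ l, x ∈ gens π) ∧ l.prod = g⁻¹ * h :=
  Nat.sInf_mem (wdist_set_nonempty' hπ g h)

lemma wdist_le' {g h : G} {l : List G} (hl : ∀ x ∈ l, x ∈ gens π) (hp : l.prod = g⁻¹ * h) :
    wdist π g h ≤ l.length :=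
  Nat.sInf_le ⟨l, rfl, hl, hp⟩

lemma wdist_triangle' (hπ : Function.Surjective π) (g k h : G) :
    wdist π g h ≤ wdist π g k + wdist π k h := by
  obtain ⟨l₁, h₁, hg₁, hp₁⟩ := wdist_spec' hπ g k
  obtain ⟨l₂, h₂, hg₂, hp₂⟩ := wdist_spec' hπ k h
  have := wdist_le' (π := π) (g := g) (h := h) (l := l₁ ++ l₂)
    (by intro x hx; rcases List.mem_append.1 hx with hx | hx; exacts [hg₁ x hx, hg₂ x hx])
    (by rw [List.prod_append, hp₁, hp₂]; group)
  simpa [h₁, h₂] using this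

lemma wdist_symm' (hπ : Function.Surjective π) (g h : G) :
    wdist π g h = wdist π h g := by
  have key : ∀ g h : G, wdist π g h ≤ wdist π h g := by
    intro g h
    obtain ⟨l, hl, hg, hp⟩ := wdist_spec' hπ h g
    have := wdist_le' (π := π) (g := g) (h := h) (l := (l.map (·⁻¹)).reverse)
      (by intro x hx
          simp only [List.mem_reverse, List.mem_map] at hx
          obtain ⟨y, hy, rfl⟩ := hx
          exact gens_inv' (hg y hy))
      (by rw [List.prod_reverse_noncomm, List.map_map]
          have hid : ((fun x : G => x⁻¹) ∘ fun x : G => x⁻¹) = id := by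
            funext x; simp
          rw [hid, List.map_id, hp]; group)
    simpa [hl] using this
  exact le_antisymm (key g h) (key h g)

lemma wdist_mul_left' (a g h : G) : wdist π (a * g) (a * h) = wdist π g h := by
  unfold wdist
  congr 1
  ext n
  simp [mul_assoc, mul_inv_rev]

lemma wdist_mul_right_le' (g : G) (w : List A) :
    wdist π g (g * evalW π w) ≤ w.length := by
  have := wdist_le' (π := π) (g := g) (h := g * evalW π w)
    (l := w.map (fun a => π (FreeMonoid.of a)))
    (by intro x hx
        simp only [List.mem_map] at hx
        obtain ⟨a, -, rfl⟩ := hx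
        exact Or.inl ⟨a, rfl⟩)
    (by rw [prod_map_eq']; group)
  simpa using this

lemma ft_symm' (hπ : Function.Surjective π) {p : ℝ≥0} {u v : List A}
    (h : FellowTravel π p u v) : FellowTravel π p v u := by
  intro n; rw [wdist_symm' hπ]; exact h n

lemma key_lemma (hπ : Function.Surjective π)
    {L : Language A} {D : ℝ≥0 → ℝ≥0} (hD : IsDepartureFunction π L D)
    {p₁ p₂ : ℝ≥0} {u₁ u₂ v₁ v₂ : List A} (hv₁ : v₁ ∈ L)
    (h₁ : MFT π p₁ u₁ v₁) (h₂ : FellowTravel π p₂ u₂ v₂)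
    (hlen : u₁.length ≤ v₁.length) :
    FellowTravel π (max (2 * p₁) (max (p₁ + D (2 * p₁)) (p₂ + D (2 * p₁))))
      (u₁ ++ u₂) (v₁ ++ v₂) := by
  set N := max (2 * p₁) (max (p₁ + D (2 * p₁)) (p₂ + D (2 * p₁))) with hN
  set t := v₁.length - u₁.length with htdef
  -- the length difference is less than D (2 p₁)
  have ht : (t : ℝ≥0) < D (2 * p₁) := by
    by_contra hcon
    push_neg at hcon
    have hdep := hD v₁ hv₁ (2 * p₁) u₁.length t hcon (by omega)
    have htake : v₁.take (u₁.length + t) = v₁ := List.take_of_length_le (by omega)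
    rw [htake] at hdep
    have hft := h₁.1 u₁.length
    rw [List.take_length, h₁.2] at hft
    rw [wdist_symm' hπ] at hft
    have : (2 : ℝ≥0) * p₁ < 2 * p₁ := lt_of_lt_of_le hdep
      (hft.trans (by rw [two_mul]; exact le_add_self))
    exact lt_irrefl _ this
  intro n
  rcases le_or_gt n u₁.length with hA | hA
  · -- both prefixes are within u₁, v₁
    have e1 : (u₁ ++ u₂).take n = u₁.take n := by
      rw [List.take_append, Nat.sub_eq_zero_of_le hA]; simp
    have e2 : (v₁ ++ v₂).take n = v₁.take n := by
      rw [List.take_append, Nat.sub_eq_zero_of_le (hA.trans hlen)]; simp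
    rw [e1, e2]
    refine (h₁.1 n).trans ?_
    exact le_trans (by rw [two_mul]; exact le_add_self) (le_max_left _ _)
  · have e1 : (u₁ ++ u₂).take n = u₁ ++ u₂.take (n - u₁.length) := by
      rw [List.take_append, List.take_of_length_le hA.le]
    rcases le_or_gt n v₁.length with hB | hB
    · -- middle case
      have e2 : (v₁ ++ v₂).take n = v₁.take n := by
        rw [List.take_append, Nat.sub_eq_zero_of_le hB]; simp
      rw [e1, e2]
      have d1 : wdist π (evalW π (u₁ ++ u₂.take (n - u₁.length))) (evalW π u₁)
          ≤ n - u₁.length := by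
        rw [wdist_symm' hπ, evalW_append']
        exact (wdist_mul_right_le' _ _).trans (by simp)
      have d2 : wdist π (evalW π u₁) (evalW π (v₁.take n)) ≤ v₁.length - n := by
        rw [h₁.2, wdist_symm' hπ]
        have hv : v₁ = v₁.take n ++ v₁.drop n := (List.take_append_drop n v₁).symm
        calc wdist π (evalW π (v₁.take n)) (evalW π v₁)
            = wdist π (evalW π (v₁.take n)) (evalW π (v₁.take n) * evalW π (v₁.drop n)) := by
              rw [← evalW_append', ← hv]
          _ ≤ (v₁.drop n).length := wdist_mul_right_le' _ _
          _ ≤ v₁.length - n := by simp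
      have dtot : wdist π (evalW π (u₁ ++ u₂.take (n - u₁.length))) (evalW π (v₁.take n)) ≤ t :=
        le_trans (wdist_triangle' hπ _ _ _) (le_trans (Nat.add_le_add d1 d2) (by omega))
      calc (wdist π (evalW π (u₁ ++ u₂.take (n - u₁.length))) (evalW π (v₁.take n)) : ℝ≥0)
          ≤ (t : ℝ≥0) := Nat.cast_le.2 dtot
        _ ≤ D (2 * p₁) := ht.le
        _ ≤ p₁ + D (2 * p₁) := le_add_self
        _ ≤ N := le_trans (le_max_left _ _) (le_max_right _ _)
    · -- past both
      set m₁ := n - u₁.length with hm₁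
      set m₂ := n - v₁.length with hm₂
      have e2 : (v₁ ++ v₂).take n = v₁ ++ v₂.take m₂ := by
        rw [List.take_append, List.take_of_length_le hB.le]
      rw [e1, e2, evalW_append', evalW_append', h₁.2, wdist_mul_left']
      have d1 : wdist π (evalW π (u₂.take m₂)) (evalW π (u₂.take m₁)) ≤ m₁ - m₂ := by
        have hsplit : u₂.take m₁ = u₂.take m₂ ++ (u₂.drop m₂).take (m₁ - m₂) := by
          rw [← List.take_add]
          congr 1
          omega
        rw [hsplit, evalW_append']
        exact (wdist_mul_right_le' _ _).trans (by simp)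
      have dtot := wdist_triangle' hπ (evalW π (u₂.take m₁)) (evalW π (u₂.take m₂))
        (evalW π (v₂.take m₂))
      calc (wdist π (evalW π (u₂.take m₁)) (evalW π (v₂.take m₂)) : ℝ≥0)
          ≤ (wdist π (evalW π (u₂.take m₁)) (evalW π (u₂.take m₂)) : ℝ≥0)
            + (wdist π (evalW π (u₂.take m₂)) (evalW π (v₂.take m₂)) : ℝ≥0) := by
              rw [← Nat.cast_add]; exact Nat.cast_le.2 dtot
        _ ≤ (t : ℝ≥0) + p₂ := by
              refine add_le_add ?_ (h₂ m₂)
              rw [wdist_symm' hπ]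
              refine le_trans (Nat.cast_le.2 d1) (Nat.cast_le.2 ?_)
              omega
        _ ≤ D (2 * p₁) + p₂ := add_le_add ht.le le_rfl
        _ = p₂ + D (2 * p₁) := add_comm _ _
        _ ≤ N := le_trans (le_max_right _ _) (le_max_right _ _)

end Lemmas

end Auto

open Auto

/-- If `L` is an automatic structure admitting a departure function `D`,
for all `p₁, p₂ > 0` there is `N ∈ ℕ` such that if `u₁, v₁` are `p₁`-MFT and `u₂, v₂`
`p₂`-fellow travel, then `u₁u₂` and `v₁v₂` `N`-fellow travel; in fact one may take
`N = max {2p₁, p₁ + D(2p₁), p₂ + D(2p₁)}`. -/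
theorem concat_fellow_travel {A G : Type*} [Fintype A] [Group G]
    (π : FreeMonoid A →* G) (hπ : Function.Surjective π)
    (L : Language A) (hL : IsAutomaticStructure π L)
    (D : ℝ≥0 → ℝ≥0) (hD : IsDepartureFunction π L D)
    (p₁ p₂ : ℝ≥0) (hp₁ : 0 < p₁) (hp₂ : 0 < p₂) :
    (∃ N : ℕ, ∀ u₁ ∈ L, ∀ u₂ ∈ L, ∀ v₁ ∈ L, ∀ v₂ ∈ L,
      MFT π p₁ u₁ v₁ → FellowTravel π p₂ u₂ v₂ →
        FellowTravel π (N : ℝ≥0) (u₁ ++ u₂) (v₁ ++ v₂)) ∧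
    (∀ u₁ ∈ L, ∀ u₂ ∈ L, ∀ v₁ ∈ L, ∀ v₂ ∈ L,
      MFT π p₁ u₁ v₁ → FellowTravel π p₂ u₂ v₂ →
        FellowTravel π (max (2 * p₁) (max (p₁ + D (2 * p₁)) (p₂ + D (2 * p₁))))
          (u₁ ++ u₂) (v₁ ++ v₂)) := by
  have main : ∀ u₁ ∈ L, ∀ u₂ ∈ L, ∀ v₁ ∈ L, ∀ v₂ ∈ L,
      MFT π p₁ u₁ v₁ → FellowTravel π p₂ u₂ v₂ →
        FellowTravel π (max (2 * p₁) (max (p₁ + D (2 * p₁)) (p₂ + D (2 * p₁))))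
          (u₁ ++ u₂) (v₁ ++ v₂) := by
    intro u₁ hu₁ u₂ hu₂ v₁ hv₁ v₂ hv₂ hMFT hFT
    rcases le_total u₁.length v₁.length with hle | hle
    · exact key_lemma hπ hD hv₁ hMFT hFT hle
    · exact ft_symm' hπ (key_lemma hπ hD hu₁ ⟨ft_symm' hπ hMFT.1, hMFT.2.symm⟩
        (ft_symm' hπ hFT) hle)
  refine ⟨⟨⌈(max (2 * p₁) (max (p₁ + D (2 * p₁)) (p₂ + D (2 * p₁))) : ℝ≥0)⌉₊, ?_⟩, main⟩
  intro u₁ hu₁ u₂ hu₂ v₁ hv₁ v₂ hv₂ hMFT hFT n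
  exact le_trans (main u₁ hu₁ u₂ hu₂ v₁ hv₁ v₂ hv₂ hMFT hFT n) (Nat.le_ceil _)
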